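/- Let H be a Hopf algebra with involutive antipode (S² = id), and let h ∈ H be cocommutative, i.e. h₍₁₎ ⊗ h₍₂₎ = h₍₂₎ ⊗ h₍₁₎. Then the n-fold iterated coproduct of h is cyclically invariant: h₍₁₎ ⊗ h₍₂₎ ⊗ ⋯ ⊗ h₍ₙ₎ = h₍₂₎ ⊗ ⋯ ⊗ h₍ₙ₎ ⊗ h₍₁₎. -/

import Mathlib

/-!
By coassociativity, expanding the first leg of `Δ h = h₍₁₎ ⊗ h₍₂₎` into an iterated coproduct
and keeping the second leg last yields the iterated coproduct of `h`. Cocommutativity lets us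
replace `Δ h` by its flip `h₍₂₎ ⊗ h₍₁₎` first, and the same expansion then gives the cyclic shift.
-/

open TensorProduct Coalgebra

noncomputable section

/-- A complex vector space, bundled with its instances (used to build iterated tensor
powers by recursion). -/
structure CBundle where
  carrier : Type
  [inst1 : AddCommMonoid carrier]
  [inst2 : Module ℂ carrier]

attribute [instance] CBundle.inst1 CBundle.inst2

/-- `Tb B n` is the `(n+1)`-fold (right-nested) tensor power `B ⊗ B ⊗ ⋯ ⊗ B`. -/
def Tb (B : CBundle) : ℕ → CBundle
  | 0 => B
  | n + 1 => { carrier := TensorProduct ℂ B.carrier (Tb B n).carrier }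

/-- The bundle of a Hopf algebra `H`. -/
def HB (H : Type) [Ring H] [HopfAlgebra ℂ H] : CBundle := { carrier := H }

/-- The iterated comultiplication `Δ⁽ⁿ⁾ : H → H^{⊗(n+1)}`,
`h ↦ h₍₁₎ ⊗ h₍₂₎ ⊗ ⋯ ⊗ h₍ₙ₊₁₎`. -/
def iterComul (H : Type) [Ring H] [HopfAlgebra ℂ H] :
    (n : ℕ) → H →ₗ[ℂ] (Tb (HB H) n).carrier
  | 0 => LinearMap.id
  | n + 1 =>
      (TensorProduct.map LinearMap.id (iterComul H n)) ∘ₗ (comul : H →ₗ[ℂ] H ⊗[ℂ] H)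

/-- `cycComul H n : H ⊗ H → H^{⊗(n+2)}` sends `a ⊗ b` to
`a₍₁₎ ⊗ ⋯ ⊗ a₍ₙ₊₁₎ ⊗ b`, i.e. it expands the first leg and appends the second leg
at the end.  Applied to the swap `h₍₂₎ ⊗ h₍₁₎` of `Δ(h)` it hence produces the cyclic
shift `h₍₂₎ ⊗ ⋯ ⊗ h₍ₙ₊₂₎ ⊗ h₍₁₎` of the iterated coproduct. -/
def cycComul (H : Type) [Ring H] [HopfAlgebra ℂ H] :
    (n : ℕ) → (H ⊗[ℂ] H) →ₗ[ℂ] (Tb (HB H) (n + 1)).carrier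
  | 0 => LinearMap.id
  | n + 1 =>
      (TensorProduct.map LinearMap.id (cycComul H n)) ∘ₗ
        (TensorProduct.assoc ℂ H H H).toLinearMap ∘ₗ
        (TensorProduct.map (comul : H →ₗ[ℂ] H ⊗[ℂ] H) LinearMap.id)

theorem cycComul_comp_comul (H : Type) [Ring H] [HopfAlgebra ℂ H] :
    ∀ n : ℕ, cycComul H n ∘ₗ comul = iterComul H (n + 1)
  | 0 => congrArg (· ∘ₗ comul) TensorProduct.map_id.symm
  | n + 1 => by
    show (cycComul H n).lTensor H ∘ₗ
        (TensorProduct.assoc ℂ H H H).toLinearMap ∘ₗ comul.rTensor H ∘ₗ comul =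
      (iterComul H (n + 1)).lTensor H ∘ₗ comul
    rw [Coalgebra.coassoc, ← cycComul_comp_comul H n, LinearMap.lTensor_comp]
    rfl

theorem stmt3 {H : Type} [Ring H] [HopfAlgebra ℂ H]
    (h : H)
    (hcocomm : (TensorProduct.comm ℂ H H) (comul (R := ℂ) h) = comul (R := ℂ) h) :
    ∀ n : ℕ,
      iterComul H (n + 1) h =
        cycComul H n ((TensorProduct.comm ℂ H H) (comul (R := ℂ) h)) := by
  intro n
  rw [hcocomm]
  exact (LinearMap.congr_fun (cycComul_comp_comul H n) h).symm

end
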